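/- Let V : ℝ^d → ℝ be measurable with ∫ e^{-V} dx = 1, let K : L¹ ∩ L² → L^∞ be a linear map with adjoint K* satisfying ‖K*(e^{-V})‖_{L^∞} ≤ ζ, and let ρ ∈ L¹ ∩ L² with ρ ≥ 0 and ‖ρ‖_{L¹} ≤ 1. Then ∫ e^{-V(x) - (Kρ)(x)} dx ≥ e^{-ζ}. -/

import Mathlib

/-!
Under the probability measure `e^{-V} dx`, Jensen's inequality for `exp` gives
`∫ e^{-V-Kρ} dx ≥ exp (-∫ Kρ e^{-V} dx)`, and by duality `∫ Kρ e^{-V} dx = ∫ ρ K*(e^{-V}) dx`,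
which is at most `ζ ‖ρ‖₁ ≤ ζ`.
-/

open MeasureTheory Real

section GibbsMeasure

variable {α : Type*} [MeasurableSpace α] (ν : Measure α) (V : α → ℝ)

noncomputable def gibbsMeasure : Measure α :=
  ν.withDensity fun x => ENNReal.ofReal (exp (-V x))

variable {ν V}

theorem integral_gibbsMeasure (hV : Measurable V) (g : α → ℝ) :
    ∫ x, g x ∂gibbsMeasure ν V = ∫ x, exp (-V x) * g x ∂ν := by
  rw [gibbsMeasure, integral_withDensity_eq_integral_toReal_smul
    (by fun_prop) (.of_forall fun _ => ENNReal.ofReal_lt_top)]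
  simp only [ENNReal.toReal_ofReal (exp_nonneg _), smul_eq_mul]

theorem integrable_gibbsMeasure_iff (hV : Measurable V) {g : α → ℝ} :
    Integrable g (gibbsMeasure ν V) ↔ Integrable (fun x => exp (-V x) * g x) ν := by
  rw [gibbsMeasure, integrable_withDensity_iff_integrable_smul'
    (by fun_prop) (.of_forall fun _ => ENNReal.ofReal_lt_top)]
  simp only [ENNReal.toReal_ofReal (exp_nonneg _), smul_eq_mul]

theorem isProbabilityMeasure_gibbsMeasure (hnorm : ∫ x, exp (-V x) ∂ν = 1) : IsProbabilityMeasure (gibbsMeasure ν V) := by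
  have hint : Integrable (fun x => exp (-V x)) ν :=
    Integrable.of_integral_ne_zero (by rw [hnorm]; exact one_ne_zero)
  constructor
  rw [gibbsMeasure, withDensity_apply _ MeasurableSet.univ, Measure.restrict_univ,
    ← ofReal_integral_eq_lintegral_ofReal hint (.of_forall fun _ => exp_nonneg _), hnorm,
    ENNReal.ofReal_one]

end GibbsMeasure

theorem exp_integral_le_integral_exp {α : Type*} [MeasurableSpace α] {μ : Measure α}
    [IsProbabilityMeasure μ] {f : α → ℝ} (hf : Integrable f μ)
    (hexp : Integrable (fun x => exp (f x)) μ) :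
    exp (∫ x, f x ∂μ) ≤ ∫ x, exp (f x) ∂μ :=
  convexOn_exp.map_integral_le continuous_exp.continuousOn isClosed_univ
    (.of_forall fun _ => Set.mem_univ _) hf hexp

theorem integral_mul_le_of_abs_le {α : Type*} [MeasurableSpace α] [Nonempty α]
    {μ : Measure α} {ρ h : α → ℝ} {ζ : ℝ} (hρ : ∀ x, 0 ≤ ρ x) (hρint : Integrable ρ μ)
    (hρmass : ∫ x, ρ x ∂μ ≤ 1) (hh : ∀ x, |h x| ≤ ζ) :
    ∫ x, ρ x * h x ∂μ ≤ ζ := by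
  have hζ : 0 ≤ ζ := (abs_nonneg _).trans (hh (Classical.arbitrary α))
  by_cases hint : Integrable (fun x => ρ x * h x) μ
  · calc ∫ x, ρ x * h x ∂μ ≤ ∫ x, ζ * ρ x ∂μ :=
          integral_mono hint (hρint.const_mul ζ) fun x => by
            rw [mul_comm ζ]
            exact mul_le_mul_of_nonneg_left ((le_abs_self _).trans (hh x)) (hρ x)
      _ = ζ * ∫ x, ρ x ∂μ := integral_const_mul ζ ρ
      _ ≤ ζ := mul_le_of_le_one_right hζ hρmass
  · rw [integral_undef hint]
    exact hζ

theorem mass_lower_bound_general {d : ℕ}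
    (V : (Fin d → ℝ) → ℝ) (hVmeas : Measurable V)
    (hV : ∫ x, Real.exp (-V x) = 1)
    (K Ks : ((Fin d → ℝ) → ℝ) → ((Fin d → ℝ) → ℝ))
    (hadj : ∀ f g : (Fin d → ℝ) → ℝ,
      ∫ x, K f x * g x = ∫ x, f x * Ks g x)
    (ζ : ℝ)
    (hKs : ∀ x, |Ks (fun y => Real.exp (-V y)) x| ≤ ζ)
    (ρ : (Fin d → ℝ) → ℝ) (hρpos : ∀ x, 0 ≤ ρ x)
    (hρL1 : Integrable ρ)
    (hρmass : ∫ x, ρ x ≤ 1)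
    (hint : Integrable (fun x => Real.exp (-V x - K ρ x)))
    (hKρint : Integrable (fun x => K ρ x * Real.exp (-V x))) :
    Real.exp (-ζ) ≤ ∫ x, Real.exp (-V x - K ρ x) := by
  have := isProbabilityMeasure_gibbsMeasure hV
  have hexp_split : ∀ x, exp (-V x - K ρ x) = exp (-V x) * exp (-K ρ x) := fun x => by
    rw [sub_eq_add_neg, exp_add]
  have hmean : ∫ x, -K ρ x ∂gibbsMeasure volume V =
      -∫ x, ρ x * Ks (fun y => exp (-V y)) x := by
    rw [integral_gibbsMeasure hVmeas, ← hadj, ← integral_neg]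
    congr 1 with x
    ring
  calc exp (-ζ) ≤ exp (∫ x, -K ρ x ∂gibbsMeasure volume V) := by
        rw [exp_le_exp, hmean, neg_le_neg_iff]
        exact integral_mul_le_of_abs_le hρpos hρL1 hρmass hKs
    _ ≤ ∫ x, exp (-K ρ x) ∂gibbsMeasure volume V :=
        exp_integral_le_integral_exp
          ((integrable_gibbsMeasure_iff hVmeas).2
            (hKρint.neg.congr (.of_forall fun x => by simp only [Pi.neg_apply]; ring)))
          ((integrable_gibbsMeasure_iff hVmeas).2 (by simpa only [hexp_split] using hint))
    _ = ∫ x, exp (-V x - K ρ x) := by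
        simp only [integral_gibbsMeasure hVmeas, hexp_split]

theorem mass_lower_bound {d : ℕ}
    (V : (Fin d → ℝ) → ℝ) (hVmeas : Measurable V)
    (hV : ∫ x, Real.exp (-V x) = 1)
    (K Ks : ((Fin d → ℝ) → ℝ) → ((Fin d → ℝ) → ℝ))
    (hKlin : IsLinearMap ℝ K)
    (hadj : ∀ f g : (Fin d → ℝ) → ℝ,
      ∫ x, K f x * g x = ∫ x, f x * Ks g x)
    (ζ : ℝ)
    (hKs : ∀ x, |Ks (fun y => Real.exp (-V y)) x| ≤ ζ)
    (ρ : (Fin d → ℝ) → ℝ) (hρpos : ∀ x, 0 ≤ ρ x)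
    (hρL1 : Integrable ρ) (hρL2 : MemLp ρ 2)
    (hρmass : ∫ x, ρ x ≤ 1)
    (hint : Integrable (fun x => Real.exp (-V x - K ρ x)))
    (hKρint : Integrable (fun x => K ρ x * Real.exp (-V x))) :
    Real.exp (-ζ) ≤ ∫ x, Real.exp (-V x - K ρ x) :=
  mass_lower_bound_general V hVmeas hV K Ks hadj ζ hKs ρ hρpos hρL1 hρmass hint hKρint
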